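/- Let C₁ and C₂ be two classes belonging to a complete set of Pauli classes in dimension d = 4. Then there do not exist maximal commuting Pauli classes C₃′ and C₄′ such that C₁, C₂, C₃′, C₄′ are pairwise disjoint and the family {C₁, C₂, C₃′, C₄′} is unextendible; equivalently, any such family of four pairwise disjoint classes extends to a complete set of five pairwise disjoint maximal commuting Pauli classes. -/

import Mathlib

open Matrix

noncomputable section

/-- Matrices on the Hilbert space of `n` qubits, with rows and columns indexed by
bit strings `Fin n → Fin 2`. -/
abbrev QMat (n : ℕ) := Matrix (Fin n → Fin 2) (Fin n → Fin 2) ℂ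

/-- The single-qubit identity. -/
def pI : Matrix (Fin 2) (Fin 2) ℂ := 1

/-- The single-qubit Pauli X. -/
def pX : Matrix (Fin 2) (Fin 2) ℂ := !![0, 1; 1, 0]

/-- The single-qubit Pauli Y. -/
def pY : Matrix (Fin 2) (Fin 2) ℂ := !![0, -Complex.I; Complex.I, 0]

/-- The single-qubit Pauli Z. -/
def pZ : Matrix (Fin 2) (Fin 2) ℂ := !![1, 0; 0, -1]

/-- The `n`-fold Kronecker product `W 0 ⊗ ⋯ ⊗ W (n-1)`, realized on indices
`Fin n → Fin 2`. -/
def kron (n : ℕ) (W : Fin n → Matrix (Fin 2) (Fin 2) ℂ) : QMat n :=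
  fun v w => ∏ j, W j (v j) (w j)

/-- `M` is an `n`-qubit Pauli operator: an `n`-fold Kronecker product of matrices
from `{I₂, X, Y, Z}`. -/
def IsPauliOp (n : ℕ) (M : QMat n) : Prop :=
  ∃ W : Fin n → Matrix (Fin 2) (Fin 2) ℂ,
    (∀ j, W j = pI ∨ W j = pX ∨ W j = pY ∨ W j = pZ) ∧ M = kron n W

/-- Two matrices are equal up to phase if one is a nonzero scalar multiple of the other. -/
def PhaseEq {m : Type*} (A B : Matrix m m ℂ) : Prop := ∃ c : ℂ, c ≠ 0 ∧ A = c • B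

/-- A maximal commuting Pauli class in dimension `d = 2 ^ n`: a set of `d - 1`
pairwise commuting non-identity `n`-qubit Pauli operators, pairwise distinct up to phase. -/
def IsMaxClass (n : ℕ) (C : Set (QMat n)) : Prop :=
  C.Finite ∧ C.ncard = 2 ^ n - 1 ∧
  (∀ U ∈ C, IsPauliOp n U ∧ U ≠ 1) ∧
  (∀ U ∈ C, ∀ V ∈ C, U * V = V * U) ∧
  (∀ U ∈ C, ∀ V ∈ C, U ≠ V → ¬ PhaseEq U V)

/-- Two classes are disjoint if no member of one is equal up to phase to a member of the other. -/
def ClassDisjoint {n : ℕ} (C D : Set (QMat n)) : Prop :=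
  ∀ U ∈ C, ∀ V ∈ D, ¬ PhaseEq U V

/-- Two classes are equal up to phase (as sets of operators). -/
def ClassPhaseEq {n : ℕ} (C D : Set (QMat n)) : Prop :=
  (∀ U ∈ C, ∃ V ∈ D, PhaseEq U V) ∧ (∀ V ∈ D, ∃ U ∈ C, PhaseEq U V)

/-- The standard Hermitian inner product on `ι → ℂ` (conjugate-linear in the first slot). -/
def cinner {ι : Type*} [Fintype ι] (x y : ι → ℂ) : ℂ :=
  ∑ k, (starRingEnd ℂ) (x k) * y k

/-!
Label a two-qubit Pauli operator, up to phase, by its pair of single-qubit indices in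
`{I, X, Y, Z}`. Two operators commute iff an even number of tensor factors anticommute, and a
maximal commuting class is a set of three pairwise commuting nonzero labels. Two distinct
commuting nonzero labels have exactly three nonzero labels commuting with both, so they determine
their class, and a nonzero label outside a class commutes with at most one of its members.
Four pairwise disjoint classes cover 12 of the 16 labels. A nonzero label `u` among the remaining
four commutes with 8 labels, at most 4 of which lie in the classes; hence it commutes with all four
remaining labels, and the three nonzero ones form a fifth class disjoint from the given four.
-/

open Finset

def pauliMat : Fin 4 → Matrix (Fin 2) (Fin 2) ℂ := ![pI, pX, pY, pZ]

lemma pauliMat_mul_self (a : Fin 4) : pauliMat a * pauliMat a = 1 := by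
  fin_cases a <;> ext i j <;> fin_cases i <;> fin_cases j <;>
    simp [pauliMat, pI, pX, pY, pZ, Matrix.mul_apply, Fin.sum_univ_two]

lemma pauliMat_mul_comm (a b : Fin 4) :
    pauliMat a * pauliMat b =
      (if a = b ∨ a = 0 ∨ b = 0 then 1 else -1 : ℂ) • (pauliMat b * pauliMat a) := by
  fin_cases a <;> fin_cases b <;> ext i j <;> fin_cases i <;> fin_cases j <;>
    simp [pauliMat, pI, pX, pY, pZ, Matrix.mul_apply, Fin.sum_univ_two]

lemma trace_pauliMat_mul (a b : Fin 4) :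
    trace (pauliMat a * pauliMat b) = if a = b then 2 else 0 := by
  fin_cases a <;> fin_cases b <;>
    simp [pauliMat, pI, pX, pY, pZ, Matrix.trace_fin_two] <;>
    norm_num

section Kron

variable {n : ℕ}

lemma kron_mul (W W' : Fin n → Matrix (Fin 2) (Fin 2) ℂ) :
    kron n W * kron n W' = kron n (W * W') := by
  ext v w
  simp only [kron, Matrix.mul_apply, Pi.mul_apply, prod_univ_sum, Fintype.piFinset_univ,
    prod_mul_distrib]

lemma trace_kron (W : Fin n → Matrix (Fin 2) (Fin 2) ℂ) :
    trace (kron n W) = ∏ j, trace (W j) := by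
  simp only [Matrix.trace, Matrix.diag, kron, prod_univ_sum, Fintype.piFinset_univ]

lemma kron_smul (c : Fin n → ℂ) (W : Fin n → Matrix (Fin 2) (Fin 2) ℂ) :
    kron n (fun j => c j • W j) = (∏ j, c j) • kron n W := by
  ext v w
  simp only [kron, Matrix.smul_apply, smul_eq_mul, prod_mul_distrib]

lemma kron_one : kron n (fun _ => 1) = 1 := by
  ext v w
  simp only [kron, Matrix.one_apply, prod_boole, mem_univ, true_implies,
    funext_iff]

end Kron

def pauliOp (n : ℕ) (p : Fin n → Fin 4) : QMat n := kron n fun j => pauliMat (p j)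

def anticommSites {n : ℕ} (p q : Fin n → Fin 4) : Finset (Fin n) :=
  {j | ¬(p j = q j ∨ p j = 0 ∨ q j = 0)}

def LabelCommute {n : ℕ} (p q : Fin n → Fin 4) : Prop := Even (anticommSites p q).card

instance {n : ℕ} (p q : Fin n → Fin 4) : Decidable (LabelCommute p q) :=
  inferInstanceAs (Decidable (Even _))

namespace LabelCommute

variable {n : ℕ}

lemma symm {p q : Fin n → Fin 4} (h : LabelCommute p q) : LabelCommute q p := by
  simpa only [LabelCommute, anticommSites, eq_comm, or_comm] using h

end LabelCommute

section PauliOp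

variable {n : ℕ}

lemma pauliOp_zero : pauliOp n 0 = 1 := by
  simpa [pauliOp, pauliMat, pI] using kron_one

lemma pauliOp_mul (p q : Fin n → Fin 4) :
    pauliOp n p * pauliOp n q = kron n fun j => pauliMat (p j) * pauliMat (q j) :=
  kron_mul _ _

lemma pauliOp_mul_self (p : Fin n → Fin 4) : pauliOp n p * pauliOp n p = 1 := by
  simp only [pauliOp_mul, pauliMat_mul_self, kron_one]

lemma trace_pauliOp_mul (p q : Fin n → Fin 4) :
    trace (pauliOp n p * pauliOp n q) = if p = q then 2 ^ n else 0 := by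
  simp only [pauliOp_mul, trace_kron, trace_pauliMat_mul, prod_ite_zero,
    mem_univ, true_implies, prod_const, card_univ, Fintype.card_fin]
  exact if_congr funext_iff.symm rfl rfl

lemma phaseEq_pauliOp_iff {p q : Fin n → Fin 4} :
    PhaseEq (pauliOp n p) (pauliOp n q) ↔ p = q := by
  refine ⟨fun ⟨c, _, hc⟩ => ?_, fun h => ⟨1, one_ne_zero, by rw [h, one_smul]⟩⟩
  by_contra hpq
  have h : trace (pauliOp n p * (c • pauliOp n q)) = 2 ^ n := by
    rw [← hc, trace_pauliOp_mul, if_pos rfl]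
  rw [Matrix.mul_smul, trace_smul, trace_pauliOp_mul, if_neg hpq, smul_zero] at h
  exact two_ne_zero (pow_eq_zero_iff'.1 h.symm).1

lemma pauliOp_injective : Function.Injective (pauliOp n) :=
  fun _ _ h => phaseEq_pauliOp_iff.1 ⟨1, one_ne_zero, by rw [h, one_smul]⟩

lemma pauliOp_eq_one_iff {p : Fin n → Fin 4} : pauliOp n p = 1 ↔ p = 0 := by
  rw [← pauliOp_zero, pauliOp_injective.eq_iff]

lemma pauliOp_mul_comm (p q : Fin n → Fin 4) :
    pauliOp n p * pauliOp n q =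
      (-1 : ℂ) ^ (anticommSites p q).card • (pauliOp n q * pauliOp n p) := by
  simp only [pauliOp_mul]
  rw [funext fun j => pauliMat_mul_comm (p j) (q j), kron_smul, prod_ite,
    prod_const_one, one_mul, prod_const]
  rfl

lemma pauliOp_commute_iff {p q : Fin n → Fin 4} :
    pauliOp n p * pauliOp n q = pauliOp n q * pauliOp n p ↔ LabelCommute p q := by
  have hne : pauliOp n q * pauliOp n p ≠ 0 := by
    intro h
    have := congrArg (· * (pauliOp n p * pauliOp n q)) h
    simp only [← mul_assoc, mul_assoc (pauliOp n q), pauliOp_mul_self, mul_one,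
      zero_mul] at this
    exact one_ne_zero this
  rw [pauliOp_mul_comm, LabelCommute]
  rcases Nat.even_or_odd (anticommSites p q).card with h | h
  · simp [h.neg_one_pow, h]
  · rw [h.neg_one_pow, neg_one_smul, iff_false_intro (Nat.not_even_iff_odd.2 h), iff_false]
    intro hM
    apply hne
    ext i j
    exact neg_eq_self.1 (congrFun (congrFun hM i) j)

lemma isPauliOp_iff {U : QMat n} : IsPauliOp n U ↔ ∃ p, pauliOp n p = U := by
  constructor
  · rintro ⟨W, hW, rfl⟩
    have : ∀ j, ∃ a, pauliMat a = W j := fun j => by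
      rcases hW j with h | h | h | h
      exacts [⟨0, h.symm⟩, ⟨1, h.symm⟩, ⟨2, h.symm⟩, ⟨3, h.symm⟩]
    choose p hp using this
    exact ⟨p, by simp only [pauliOp, hp]⟩
  · rintro ⟨p, rfl⟩
    refine ⟨_, fun j => ?_, rfl⟩
    generalize p j = a
    fin_cases a <;> simp [pauliMat]

end PauliOp

section Labels

variable {n : ℕ}

def labels (C : Set (QMat n)) : Finset (Fin n → Fin 4) := (pauliOp n ⁻¹' C).toFinite.toFinset

@[simp]
lemma mem_labels {C : Set (QMat n)} {p : Fin n → Fin 4} : p ∈ labels C ↔ pauliOp n p ∈ C :=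
  Set.Finite.mem_toFinset _

def IsMaxLabelClass (n : ℕ) (L : Finset (Fin n → Fin 4)) : Prop :=
  L.card = 2 ^ n - 1 ∧ 0 ∉ L ∧ ∀ p ∈ L, ∀ q ∈ L, LabelCommute p q

lemma image_labels {C : Set (QMat n)} (hC : ∀ U ∈ C, IsPauliOp n U) :
    pauliOp n '' (labels C : Set (Fin n → Fin 4)) = C := by
  ext U
  refine ⟨fun ⟨p, hp, hU⟩ => hU ▸ mem_labels.1 hp, fun hU => ?_⟩
  obtain ⟨p, rfl⟩ := isPauliOp_iff.1 (hC U hU)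
  exact ⟨p, mem_labels.2 hU, rfl⟩

lemma ncard_image_pauliOp (L : Finset (Fin n → Fin 4)) :
    (pauliOp n '' (L : Set (Fin n → Fin 4))).ncard = L.card := by
  rw [Set.ncard_image_of_injective _ pauliOp_injective, Set.ncard_coe_finset]

lemma IsMaxClass.isMaxLabelClass_labels {C : Set (QMat n)} (hC : IsMaxClass n C) :
    IsMaxLabelClass n (labels C) := by
  obtain ⟨-, hcard, hmem, hcomm, -⟩ := hC
  refine ⟨?_, fun h0 => ?_, fun p hp q hq => ?_⟩
  · rw [← ncard_image_pauliOp, image_labels fun U hU => (hmem U hU).1, hcard]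
  · exact (hmem _ (mem_labels.1 h0)).2 pauliOp_zero
  · exact pauliOp_commute_iff.1 (hcomm _ (mem_labels.1 hp) _ (mem_labels.1 hq))

lemma IsMaxLabelClass.isMaxClass_image {L : Finset (Fin n → Fin 4)} (hL : IsMaxLabelClass n L) :
    IsMaxClass n (pauliOp n '' (L : Set (Fin n → Fin 4))) := by
  obtain ⟨hcard, h0, hcomm⟩ := hL
  refine ⟨L.finite_toSet.image _, by rw [ncard_image_pauliOp, hcard], ?_, ?_, ?_⟩
  · rintro _ ⟨p, hp, rfl⟩
    exact ⟨isPauliOp_iff.2 ⟨p, rfl⟩, fun h => h0 (pauliOp_eq_one_iff.1 h ▸ hp)⟩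
  · rintro _ ⟨p, hp, rfl⟩ _ ⟨q, hq, rfl⟩
    exact pauliOp_commute_iff.2 (hcomm p hp q hq)
  · rintro _ ⟨p, -, rfl⟩ _ ⟨q, -, rfl⟩ hpq h
    exact hpq (congrArg _ (phaseEq_pauliOp_iff.1 h))

lemma ClassDisjoint.disjoint_labels {C D : Set (QMat n)} (h : ClassDisjoint C D) :
    Disjoint (labels C) (labels D) :=
  disjoint_left.2 fun _ hC hD =>
    h _ (mem_labels.1 hC) _ (mem_labels.1 hD) (phaseEq_pauliOp_iff.2 rfl)

lemma not_phaseEq_pauliOp_of_notMem_labels {C : Set (QMat n)} (hC : IsMaxClass n C)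
    {p : Fin n → Fin 4} (hp : p ∉ labels C) {V : QMat n} (hV : V ∈ C) :
    ¬ PhaseEq (pauliOp n p) V := by
  obtain ⟨q, rfl⟩ := isPauliOp_iff.1 (hC.2.2.1 V hV).1
  rw [phaseEq_pauliOp_iff]
  rintro rfl
  exact hp (mem_labels.2 hV)

end Labels

section TwoQubits

lemma card_filter_labelCommute {u : Fin 2 → Fin 4} (hu : u ≠ 0) :
    #{v | LabelCommute u v} = 8 := by
  revert u
  decide

lemma card_commonCommutant {x y : Fin 2 → Fin 4} (hx : x ≠ 0) (hy : y ≠ 0) (hxy : x ≠ y)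
    (h : LabelCommute x y) : #{u | u ≠ 0 ∧ LabelCommute x u ∧ LabelCommute y u} = 3 := by
  revert x y
  decide

lemma IsMaxLabelClass.card_filter_labelCommute_le_one {L : Finset (Fin 2 → Fin 4)}
    (hL : IsMaxLabelClass 2 L) {u : Fin 2 → Fin 4} (hu : u ≠ 0) (huL : u ∉ L) :
    #{v ∈ L | LabelCommute u v} ≤ 1 := by
  obtain ⟨hcard, h0, hcomm⟩ := hL
  refine card_le_one.2 fun x hx y hy => ?_
  rw [mem_filter] at hx hy
  by_contra hxy
  have hsub : L ⊆ ({w | w ≠ 0 ∧ LabelCommute x w ∧ LabelCommute y w} : Finset _) :=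
    fun w hw => mem_filter.2
      ⟨mem_univ _, ne_of_mem_of_not_mem hw h0, hcomm x hx.1 w hw, hcomm y hy.1 w hw⟩
  have hcard' := card_commonCommutant (ne_of_mem_of_not_mem hx.1 h0)
    (ne_of_mem_of_not_mem hy.1 h0) hxy (hcomm x hx.1 y hy.1)
  have hL := eq_of_subset_of_card_le hsub (hcard'.trans hcard.symm).le
  apply huL
  rw [hL]
  simp [hu, hx.2.symm, hy.2.symm]

variable {L : Fin 4 → Finset (Fin 2 → Fin 4)}

lemma card_biUnion_of_isMaxLabelClass (hL : ∀ k, IsMaxLabelClass 2 (L k))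
    (hdisj : Pairwise fun k l => Disjoint (L k) (L l)) : #(univ.biUnion L) = 12 := by
  rw [card_biUnion fun k _ l _ hkl => hdisj hkl]
  simp [(hL _).1]

lemma labelCommute_of_notMem_biUnion (hL : ∀ k, IsMaxLabelClass 2 (L k))
    (hdisj : Pairwise fun k l => Disjoint (L k) (L l)) {u v : Fin 2 → Fin 4} (hu : u ≠ 0)
    (huL : u ∉ univ.biUnion L) (hvL : v ∉ univ.biUnion L) : LabelCommute u v := by
  set A := univ.biUnion L
  have hinA : #{w ∈ A | LabelCommute u w} ≤ 4 := calc
    _ = #(univ.biUnion fun k => {w ∈ L k | LabelCommute u w}) := by rw [filter_biUnion]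
    _ ≤ ∑ k, #{w ∈ L k | LabelCommute u w} := card_biUnion_le
    _ ≤ ∑ _k : Fin 4, 1 := sum_le_sum fun k _ => (hL k).card_filter_labelCommute_le_one hu
        fun h => huL (mem_biUnion.2 ⟨k, mem_univ _, h⟩)
    _ = 4 := by simp
  have hout : #(univ \ A) ≤ #{w ∈ univ \ A | LabelCommute u w} := calc
    #(univ \ A) = 8 - 4 := by rw [card_univ_sdiff, card_biUnion_of_isMaxLabelClass hL hdisj]; rfl
    _ ≤ #{w | LabelCommute u w} - #{w ∈ A | LabelCommute u w} := by
        rw [card_filter_labelCommute hu]; omega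
    _ ≤ #{w ∈ univ \ A | LabelCommute u w} := by
        rw [Nat.sub_le_iff_le_add]
        refine le_trans (le_of_eq ?_) (card_union_le _ _)
        rw [← filter_union, sdiff_union_of_subset (subset_univ A)]
  have hv : v ∈ univ \ A := mem_sdiff.2 ⟨mem_univ v, hvL⟩
  rw [← eq_of_subset_of_card_le (filter_subset _ _) hout] at hv
  exact (mem_filter.1 hv).2

theorem isMaxLabelClass_sdiff_biUnion (hL : ∀ k, IsMaxLabelClass 2 (L k))
    (hdisj : Pairwise fun k l => Disjoint (L k) (L l)) :
    IsMaxLabelClass 2 ((univ \ univ.biUnion L).erase 0) := by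
  have h0 : (0 : Fin 2 → Fin 4) ∈ univ \ univ.biUnion L := by simp [(hL _).2.1]
  refine ⟨?_, notMem_erase 0 _, fun p hp q hq => ?_⟩
  · rw [card_erase_of_mem h0, card_univ_sdiff, card_biUnion_of_isMaxLabelClass hL hdisj]
    rfl
  · simp only [mem_erase, mem_sdiff, mem_univ, true_and] at hp hq
    exact labelCommute_of_notMem_biUnion hL hdisj hp.1 hp.2 hq.2

end TwoQubits

/-- If `C₁ = S i` and `C₂ = S j` belong to a complete set of Pauli classes in
`d = 4`, then there are no maximal commuting Pauli classes `C₃'`, `C₄'` making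
`{C₁, C₂, C₃', C₄'}` a pairwise disjoint unextendible family of four classes. -/
theorem no_unextendible_four_d4 (S : Fin 5 → Set (QMat 2))
    (hmax : ∀ i, IsMaxClass 2 (S i))
    (hdisj : ∀ i j, i ≠ j → ClassDisjoint (S i) (S j))
    (i j : Fin 5) (hij : i ≠ j) :
    ¬ ∃ C₃' C₄' : Set (QMat 2), IsMaxClass 2 C₃' ∧ IsMaxClass 2 C₄' ∧
        ClassDisjoint C₃' (S i) ∧ ClassDisjoint C₃' (S j) ∧
        ClassDisjoint C₄' (S i) ∧ ClassDisjoint C₄' (S j) ∧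
        ClassDisjoint C₃' C₄' ∧
        ¬ ∃ R : Set (QMat 2), IsMaxClass 2 R ∧
            ∀ U ∈ R, ∀ V ∈ S i ∪ S j ∪ C₃' ∪ C₄', ¬ PhaseEq U V := by
  rintro ⟨C₃', C₄', h₃, h₄, d₃i, d₃j, d₄i, d₄j, d₃₄, hunext⟩
  set C : Fin 4 → Set (QMat 2) := ![S i, S j, C₃', C₄']
  have hC : ∀ k, IsMaxClass 2 (C k) := by
    intro k
    fin_cases k
    exacts [hmax i, hmax j, h₃, h₄]
  have hCdisj : Pairwise fun k l => Disjoint (labels (C k)) (labels (C l)) := by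
    have := (hdisj i j hij).disjoint_labels
    intro k l hkl
    fin_cases k <;> fin_cases l <;>
      first
        | exact absurd rfl hkl
        | exact this | exact this.symm
        | exact d₃i.disjoint_labels | exact d₃i.disjoint_labels.symm
        | exact d₃j.disjoint_labels | exact d₃j.disjoint_labels.symm
        | exact d₄i.disjoint_labels | exact d₄i.disjoint_labels.symm
        | exact d₄j.disjoint_labels | exact d₄j.disjoint_labels.symm
        | exact d₃₄.disjoint_labels | exact d₃₄.disjoint_labels.symm
  apply hunext
  refine ⟨_, (isMaxLabelClass_sdiff_biUnion (fun k => (hC k).isMaxLabelClass_labels)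
    hCdisj).isMaxClass_image, ?_⟩
  rintro _ ⟨p, hp, rfl⟩ V hV
  have hpC : ∀ k, p ∉ labels (C k) := fun k hk =>
    (mem_sdiff.1 (mem_of_mem_erase hp)).2 (mem_biUnion.2 ⟨k, mem_univ _, hk⟩)
  rcases hV with ((hV | hV) | hV) | hV
  exacts [not_phaseEq_pauliOp_of_notMem_labels (hC 0) (hpC 0) hV,
    not_phaseEq_pauliOp_of_notMem_labels (hC 1) (hpC 1) hV,
    not_phaseEq_pauliOp_of_notMem_labels (hC 2) (hpC 2) hV,
    not_phaseEq_pauliOp_of_notMem_labels (hC 3) (hpC 3) hV]
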